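/- arXiv:2407.15414 — 5 statements merged into one kernel-verified Lean document; each statement's English description precedes it below -/
import Mathlib

section
/- Let n, dm, dk, dv be positive natural numbers, X : Matrix (Fin n) (Fin dm) ℝ an input, Wq, Wk : Matrix (Fin dm) (Fin dk) ℝ and Wv : Matrix (Fin dm) (Fin dv) ℝ projection weights. Define rowSoftmax of a matrix M : Matrix (Fin n) (Fin r) ℝ by rowSoftmax M i j = Real.exp (M i j) / ∑ l, Real.exp (M i l), and define Attn(Q, K, V) = rowSoftmax ((Real.sqrt dk)⁻¹ • (Q * Kᵀ)) * V. Then for every permutation matrix P₁ : Matrix (Fin dk) (Fin dk) ℝ (the matrix of a permutation of Fin dk) and every permutation matrix P₂ : Matrix (Fin dv) (Fin dv) ℝ (the matrix of a permutation of Fin dv), Attn(X*Wq*P₁, X*Wk*P₁, X*Wv*P₂) = Attn(X*Wq, X*Wk, X*Wv) * P₂. -/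
open Matrix

/-- Row-wise softmax of a matrix. -/
noncomputable def rowSoftmax {n r : ℕ} (M : Matrix (Fin n) (Fin r) ℝ) :
    Matrix (Fin n) (Fin r) ℝ :=
  fun i j => Real.exp (M i j) / ∑ l, Real.exp (M i l)

/-- Scaled dot-product attention `softmax (Q Kᵀ / √dk) V`. -/
noncomputable def Attn {n dk dv : ℕ} (Q K : Matrix (Fin n) (Fin dk) ℝ)
    (V : Matrix (Fin n) (Fin dv) ℝ) : Matrix (Fin n) (Fin dv) ℝ :=
  rowSoftmax ((Real.sqrt dk)⁻¹ • (Q * Kᵀ)) * V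

lemma perm_mul_transpose {k : ℕ} (σ : Equiv.Perm (Fin k)) :
    σ.permMatrix ℝ * (σ.permMatrix ℝ)ᵀ = 1 := by
  rw [← PEquiv.toMatrix_symm, ← Equiv.toPEquiv_symm, ← PEquiv.toMatrix_trans,
    ← Equiv.toPEquiv_trans]
  simp [PEquiv.toMatrix_refl, Equiv.toPEquiv_refl]

/-- **Attention Permutation Invariance (single head).** Permuting the key/query projection
columns by `P₁` and the value projection columns by `P₂` permutes the attention output
columns by `P₂`. -/
theorem attention_permutation_invariance {n dm dk dv : ℕ}
    (hn : 0 < n) (hdm : 0 < dm) (hdk : 0 < dk) (hdv : 0 < dv)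
    (X : Matrix (Fin n) (Fin dm) ℝ)
    (Wq Wk : Matrix (Fin dm) (Fin dk) ℝ) (Wv : Matrix (Fin dm) (Fin dv) ℝ)
    (σ₁ : Equiv.Perm (Fin dk)) (σ₂ : Equiv.Perm (Fin dv)) :
    Attn (X * Wq * σ₁.permMatrix ℝ) (X * Wk * σ₁.permMatrix ℝ) (X * Wv * σ₂.permMatrix ℝ)
      = Attn (X * Wq) (X * Wk) (X * Wv) * σ₂.permMatrix ℝ := by
  have cancel : ∀ (M : Matrix (Fin dk) (Fin n) ℝ),
      σ₁.permMatrix ℝ * ((σ₁.permMatrix ℝ)ᵀ * M) = M := fun M => by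
    rw [← Matrix.mul_assoc, perm_mul_transpose, Matrix.one_mul]
  simp only [Attn, transpose_mul, Matrix.mul_assoc, cancel]
end

section
/- Let n, dv, dm, h be positive natural numbers and A : Fin h → Matrix (Fin n) (Fin dv) ℝ a family of head outputs. Define the concatenation concat A : Matrix (Fin n) (Fin dv × Fin h) ℝ by (concat A) i (j, l) = A l i j. Let τ : Equiv.Perm (Fin dv) with permutation matrix P₂ : Matrix (Fin dv) (Fin dv) ℝ, and let P₃ = Matrix.blockDiagonal (fun _ : Fin h => P₂ᵀ) : Matrix (Fin dv × Fin h) (Fin dv × Fin h) ℝ be the block-diagonal matrix with every diagonal block equal to P₂ᵀ. Then concat (fun l => A l * P₂) * P₃ = concat A, and consequently for every output weight W : Matrix (Fin dv × Fin h) (Fin dm) ℝ, concat (fun l => A l * P₂) * P₃ * W = concat A * W. -/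
open Matrix

/-- Concatenation of `h` head outputs along the column dimension. -/
def concat {n dv h : ℕ} (A : Fin h → Matrix (Fin n) (Fin dv) ℝ) :
    Matrix (Fin n) (Fin dv × Fin h) ℝ :=
  fun i jl => A jl.2 i jl.1

lemma permMatrix_mul_transpose_permMatrix {m R : Type*} [Fintype m] [DecidableEq m]
    [NonAssocSemiring R] (σ : Equiv.Perm m) : σ.permMatrix R * (σ.permMatrix R)ᵀ = 1 := by
  rw [transpose_permMatrix, ← permMatrix_mul, inv_mul_cancel, permMatrix_one]

lemma concat_mul_blockDiagonal {n dv h : ℕ} (B : Fin h → Matrix (Fin n) (Fin dv) ℝ)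
    (D : Fin h → Matrix (Fin dv) (Fin dv) ℝ) :
    concat B * blockDiagonal D = concat (fun l => B l * D l) := by
  ext i ⟨j, l⟩
  simp [concat, mul_apply, blockDiagonal_apply, Fintype.sum_prod_type]

theorem concat_permutation_invariance_general {n dv dm h : ℕ}
    (A : Fin h → Matrix (Fin n) (Fin dv) ℝ) (τ : Equiv.Perm (Fin dv)) :
    concat (fun l => A l * τ.permMatrix ℝ) *
        Matrix.blockDiagonal (fun _ : Fin h => (τ.permMatrix ℝ)ᵀ) = concat A ∧
    ∀ W : Matrix (Fin dv × Fin h) (Fin dm) ℝ,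
      concat (fun l => A l * τ.permMatrix ℝ) *
          Matrix.blockDiagonal (fun _ : Fin h => (τ.permMatrix ℝ)ᵀ) * W = concat A * W := by
  have undo : concat (fun l => A l * τ.permMatrix ℝ) *
      Matrix.blockDiagonal (fun _ : Fin h => (τ.permMatrix ℝ)ᵀ) = concat A := by
    simp only [concat_mul_blockDiagonal, Matrix.mul_assoc, permMatrix_mul_transpose_permMatrix,
      Matrix.mul_one]
  exact ⟨undo, fun W => by rw [undo]⟩

/-- **Multi-head concatenation invariance.** Permuting each head output by `P₂` is undone by
the block-diagonal matrix `P₃` with diagonal blocks `P₂ᵀ`; consequently the output projection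
is unchanged. -/
theorem concat_permutation_invariance {n dv dm h : ℕ}
    (hn : 0 < n) (hdv : 0 < dv) (hdm : 0 < dm) (hh : 0 < h)
    (A : Fin h → Matrix (Fin n) (Fin dv) ℝ) (τ : Equiv.Perm (Fin dv)) :
    concat (fun l => A l * τ.permMatrix ℝ) *
        Matrix.blockDiagonal (fun _ : Fin h => (τ.permMatrix ℝ)ᵀ) = concat A ∧
    ∀ W : Matrix (Fin dv × Fin h) (Fin dm) ℝ,
      concat (fun l => A l * τ.permMatrix ℝ) *
          Matrix.blockDiagonal (fun _ : Fin h => (τ.permMatrix ℝ)ᵀ) * W = concat A * W :=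
  concat_permutation_invariance_general A τ
end

section
/- Let μ be a measure on a measurable space α, k a positive natural number, ε : ℝ, and q, q' : Fin k → α → ℝ two families of nonnegative measurable functions such that q i and q' i are integrable with respect to μ for every i. Then for every measurable set O ⊆ α: ∫_O ((1/k) · ∑ i, q i y − Real.exp ε · (1/k) · ∑ i, q' i y) dμ(y) ≤ (1/k) · ∑ i, ∫ max (q i y − Real.exp ε · q' i y) 0 dμ(y) ≤ ⨆ i, ∫ max (q i y − Real.exp ε · q' i y) 0 dμ(y). -/
open MeasureTheory

/-- **Hockey-stick quantity of uniform mixtures.** The hockey-stick privacy quantity of a pair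
of uniform mixtures is at most the average, hence at most the maximum, of the hockey-stick
quantities of the matched component pairs. -/
theorem mixture_hockey_stick_le {α : Type*} [MeasurableSpace α] (μ : Measure α)
    {k : ℕ} (hk : 0 < k) (ε : ℝ) (q q' : Fin k → α → ℝ)
    (hq0 : ∀ i y, 0 ≤ q i y) (hq'0 : ∀ i y, 0 ≤ q' i y)
    (hqm : ∀ i, Measurable (q i)) (hq'm : ∀ i, Measurable (q' i))
    (hqi : ∀ i, Integrable (q i) μ) (hq'i : ∀ i, Integrable (q' i) μ)
    (O : Set α) (hO : MeasurableSet O) :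
    (∫ y in O, ((1 / (k : ℝ)) * ∑ i, q i y - Real.exp ε * ((1 / (k : ℝ)) * ∑ i, q' i y)) ∂μ
        ≤ (1 / (k : ℝ)) * ∑ i, ∫ y, max (q i y - Real.exp ε * q' i y) 0 ∂μ) ∧
    ((1 / (k : ℝ)) * ∑ i, ∫ y, max (q i y - Real.exp ε * q' i y) 0 ∂μ
        ≤ ⨆ i, ∫ y, max (q i y - Real.exp ε * q' i y) 0 ∂μ) := by
  have hkpos : (0 : ℝ) < k := by exact_mod_cast hk
  set f : Fin k → α → ℝ := fun i y => q i y - Real.exp ε * q' i y with hf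
  have hfi : ∀ i, Integrable (f i) μ := fun i => (hqi i).sub ((hq'i i).const_mul _)
  have hgi : ∀ i, Integrable (fun y => max (f i y) 0) μ := fun i =>
    (hfi i).sup (integrable_zero _ _ _)
  constructor
  · have h1 : (∫ y in O, ((1 / (k : ℝ)) * ∑ i, q i y
        - Real.exp ε * ((1 / (k : ℝ)) * ∑ i, q' i y)) ∂μ)
        = (1 / (k : ℝ)) * ∑ i, ∫ y in O, f i y ∂μ := by
      have : ∀ y, ((1 / (k : ℝ)) * ∑ i, q i y - Real.exp ε * ((1 / (k : ℝ)) * ∑ i, q' i y))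
          = (1 / (k : ℝ)) * ∑ i, f i y := by
        intro y
        simp only [hf, Finset.mul_sum, ← Finset.sum_sub_distrib]
        exact Finset.sum_congr rfl fun i _ => by ring
      simp_rw [this]
      rw [integral_const_mul]
      congr 1
      exact integral_finset_sum _ (fun i _ => (hfi i).restrict)
    rw [h1]
    refine mul_le_mul_of_nonneg_left (Finset.sum_le_sum fun i _ => ?_) (by positivity)
    calc ∫ y in O, f i y ∂μ ≤ ∫ y in O, max (f i y) 0 ∂μ := by
          apply integral_mono (hfi i).restrict (hgi i).restrict
          intro y; exact le_max_left _ _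
      _ ≤ ∫ y, max (f i y) 0 ∂μ := by
          apply setIntegral_le_integral (hgi i)
          filter_upwards with y using le_max_right _ _
  · have hbdd : BddAbove (Set.range fun i => ∫ y, max (f i y) 0 ∂μ) :=
      (Set.finite_range _).bddAbove
    have hle : ∀ i, (∫ y, max (f i y) 0 ∂μ) ≤ ⨆ j, ∫ y, max (f j y) 0 ∂μ :=
      fun i => le_ciSup hbdd i
    calc (1 / (k : ℝ)) * ∑ i, ∫ y, max (f i y) 0 ∂μ
        ≤ (1 / (k : ℝ)) * ∑ _i : Fin k, (⨆ j, ∫ y, max (f j y) 0 ∂μ) :=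
          mul_le_mul_of_nonneg_left (Finset.sum_le_sum fun i _ => hle i) (by positivity)
      _ = ⨆ j, ∫ y, max (f j y) 0 ∂μ := by
          rw [Finset.sum_const]
          simp
          field_simp
end

section
/- Let d, k be positive natural numbers, σ > 0, ε : ℝ, u, v ∈ EuclideanSpace ℝ (Fin d), and π : Fin k → Equiv.Perm (Fin d) a family of coordinate permutations. For m ∈ EuclideanSpace ℝ (Fin d), let q_m(y) = (2πσ²)^(−d/2) · Real.exp (−‖y − m‖² / (2σ²)) denote the Gaussian density with mean m and covariance σ²I. Define the shuffled mixture densities p(y) = (1/k) · ∑ i, q_{u∘π i}(y) and p'(y) = (1/k) · ∑ i, q_{v∘π i}(y), where (w∘π i) j = w (π i j). Then for every measurable set O ⊆ EuclideanSpace ℝ (Fin d), ∫_O (p(y) − Real.exp ε · p'(y)) dy ≤ ∫ max (q_u(y) − Real.exp ε · q_v(y)) 0 dy, both integrals being with respect to Lebesgue measure on EuclideanSpace ℝ (Fin d). Hence if the unshuffled Gaussian mechanism satisfies (ε,δ)-DP on the pair (u, v), so does the shuffled Gaussian mechanism. -/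
/-!
A coordinate permutation is a linear isometry of `EuclideanSpace ℝ (Fin d)`, hence preserves
Lebesgue measure; so each component pair `(q_{u∘πᵢ}, q_{v∘πᵢ})` of the shuffled mixtures has the
same hockey-stick divergence `∫ (q_u - c q_v)⁺` as `(q_u, q_v)`. The integral over `O` of the
mixture difference is the average of the component integrals over `O`, each of which is at most
that divergence.
-/

open MeasureTheory

/-- Density of the Gaussian distribution on `EuclideanSpace ℝ (Fin d)` with mean `m` and
covariance `σ²I`. -/
noncomputable def gaussDensity {d : ℕ} (σ : ℝ) (m y : EuclideanSpace ℝ (Fin d)) : ℝ :=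
  (2 * Real.pi * σ ^ 2) ^ (-(d : ℝ) / 2) * Real.exp (-‖y - m‖ ^ 2 / (2 * σ ^ 2))

open Finset

theorem setIntegral_le_integral_max_zero {α : Type*} [MeasurableSpace α] {μ : Measure α}
    {f : α → ℝ} (hf : Integrable f μ) (s : Set α) :
    ∫ x in s, f x ∂μ ≤ ∫ x, max (f x) 0 ∂μ :=
  calc ∫ x in s, f x ∂μ ≤ ∫ x in s, max (f x) 0 ∂μ :=
        setIntegral_mono hf.integrableOn hf.pos_part.integrableOn fun _ => le_max_left _ _
    _ ≤ ∫ x, max (f x) 0 ∂μ :=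
        setIntegral_le_integral hf.pos_part (.of_forall fun _ => le_max_right _ _)

theorem one_div_card_mul_sum_le {ι : Type*} {s : Finset ι} {a : ι → ℝ} {b : ℝ} (hb : 0 ≤ b)
    (h : ∀ i ∈ s, a i ≤ b) : 1 / (#s : ℝ) * ∑ i ∈ s, a i ≤ b := by
  rcases s.eq_empty_or_nonempty with rfl | hs
  · simpa using hb
  · rw [one_div_mul_eq_div, div_le_iff₀ (by exact_mod_cast hs.card_pos), mul_comm]
    simpa using sum_le_card_nsmul s a b h

section Gaussian

variable {d : ℕ} {σ : ℝ}

theorem gaussDensity_integrable (hσ : σ ≠ 0) (m : EuclideanSpace ℝ (Fin d)) :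
    Integrable (gaussDensity σ m) := by
  have hb : 0 < (1 / (2 * σ ^ 2) : ℂ).re := by norm_cast; positivity
  have h := ((GaussianFourier.integrable_cexp_neg_mul_sq_norm_add hb 0 0).norm.comp_sub_right
    m).const_mul ((2 * Real.pi * σ ^ 2) ^ (-(d : ℝ) / 2))
  convert h using 2 with y
  rw [gaussDensity, Complex.norm_exp]
  congr 2
  norm_cast
  simp only [inner_zero_left, mul_zero, add_zero]
  ring

theorem gaussDensity_map_linearIsometry
    (L : EuclideanSpace ℝ (Fin d) →ₗᵢ[ℝ] EuclideanSpace ℝ (Fin d))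
    (m y : EuclideanSpace ℝ (Fin d)) :
    gaussDensity σ (L m) (L y) = gaussDensity σ m y := by
  rw [gaussDensity, gaussDensity, ← map_sub, L.norm_map]

theorem gaussDensity_permute (e : Equiv.Perm (Fin d)) (w y : EuclideanSpace ℝ (Fin d)) :
    gaussDensity σ (WithLp.toLp 2 fun j => w (e j)) y
      = gaussDensity σ w (LinearIsometryEquiv.piLpCongrLeft 2 ℝ ℝ e y) := by
  set L := LinearIsometryEquiv.piLpCongrLeft 2 ℝ ℝ e
  have hw : (WithLp.toLp 2 fun j => w (e j)) = L.symm w := by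
    ext j; simp [L, Equiv.piCongrLeft'_apply]
  rw [hw, ← L.symm_apply_apply y, L.apply_symm_apply]
  exact gaussDensity_map_linearIsometry L.symm.toLinearIsometry w (L y)

theorem integral_max_sub_gaussDensity_permute (c : ℝ) (e : Equiv.Perm (Fin d))
    (u v : EuclideanSpace ℝ (Fin d)) :
    ∫ y, max (gaussDensity σ (WithLp.toLp 2 fun j => u (e j)) y
      - c * gaussDensity σ (WithLp.toLp 2 fun j => v (e j)) y) 0
      = ∫ y, max (gaussDensity σ u y - c * gaussDensity σ v y) 0 := by
  simp only [gaussDensity_permute]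
  exact MeasureTheory.integral_comp (LinearIsometryEquiv.piLpCongrLeft 2 ℝ ℝ e)
    fun y => max (gaussDensity σ u y - c * gaussDensity σ v y) 0

end Gaussian

theorem integral_shuffled_gaussianDensity_sub_le {d k : ℕ} {σ : ℝ} (hσ : σ ≠ 0) (c : ℝ)
    (u v : EuclideanSpace ℝ (Fin d)) (π : Fin k → Equiv.Perm (Fin d))
    (O : Set (EuclideanSpace ℝ (Fin d))) :
    ∫ y in O, (1 / (k : ℝ) * ∑ i, gaussDensity σ (WithLp.toLp 2 fun j => u (π i j)) y
      - c * (1 / (k : ℝ) * ∑ i, gaussDensity σ (WithLp.toLp 2 fun j => v (π i j)) y))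
      ≤ ∫ y, max (gaussDensity σ u y - c * gaussDensity σ v y) 0 := by
  set q : Fin k → EuclideanSpace ℝ (Fin d) → ℝ := fun i y =>
    gaussDensity σ (WithLp.toLp 2 fun j => u (π i j)) y
      - c * gaussDensity σ (WithLp.toLp 2 fun j => v (π i j)) y
  have hq : ∀ i, Integrable (q i) := fun i =>
    (gaussDensity_integrable hσ _).sub ((gaussDensity_integrable hσ _).const_mul c)
  have hD : 0 ≤ ∫ y, max (gaussDensity σ u y - c * gaussDensity σ v y) 0 :=
    integral_nonneg fun _ => le_max_right _ _
  calc _ = 1 / (k : ℝ) * ∑ i, ∫ y in O, q i y := by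
        rw [← integral_finsetSum _ fun i _ => (hq i).integrableOn, ← integral_const_mul]
        congr 1 with y
        simp only [q, mul_sum, ← sum_sub_distrib]
        exact sum_congr rfl fun i _ => by ring
    _ ≤ _ := by
        simpa using one_div_card_mul_sum_le (s := univ) hD fun i _ =>
          (setIntegral_le_integral_max_zero (hq i) O).trans_eq
            (integral_max_sub_gaussDensity_permute c (π i) u v)

theorem shuffled_gaussian_improves_privacy_general {d k : ℕ}
    {σ : ℝ} (hσ : 0 < σ) (ε : ℝ) (u v : EuclideanSpace ℝ (Fin d))
    (π : Fin k → Equiv.Perm (Fin d)) :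
    (∀ O : Set (EuclideanSpace ℝ (Fin d)), MeasurableSet O →
      ∫ y in O,
          ((1 / (k : ℝ)) * ∑ i, gaussDensity σ (WithLp.toLp 2 (fun j => u (π i j))) y
            - Real.exp ε * ((1 / (k : ℝ)) * ∑ i, gaussDensity σ (WithLp.toLp 2 (fun j => v (π i j))) y))
        ≤ ∫ y, max (gaussDensity σ u y - Real.exp ε * gaussDensity σ v y) 0) ∧
    (∀ δ : ℝ, (∫ y, max (gaussDensity σ u y - Real.exp ε * gaussDensity σ v y) 0) ≤ δ →
      ∀ O : Set (EuclideanSpace ℝ (Fin d)), MeasurableSet O →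
        ∫ y in O,
            ((1 / (k : ℝ)) * ∑ i, gaussDensity σ (WithLp.toLp 2 (fun j => u (π i j))) y
              - Real.exp ε * ((1 / (k : ℝ)) * ∑ i, gaussDensity σ (WithLp.toLp 2 (fun j => v (π i j))) y))
          ≤ δ) :=
  ⟨fun O _ => integral_shuffled_gaussianDensity_sub_le hσ.ne' _ u v π O,
    fun _ hδ O _ => (integral_shuffled_gaussianDensity_sub_le hσ.ne' _ u v π O).trans hδ⟩

/-- **Shuffling improves the privacy of the Gaussian mechanism.** The hockey-stick quantity of
the shuffled Gaussian-mixture pair is bounded by that of the unshuffled Gaussian pair; hence if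
the unshuffled Gaussian mechanism satisfies `(ε,δ)`-DP on the pair `(u, v)`, so does the
shuffled Gaussian mechanism. -/
theorem shuffled_gaussian_improves_privacy {d k : ℕ} (hd : 0 < d) (hk : 0 < k)
    {σ : ℝ} (hσ : 0 < σ) (ε : ℝ) (u v : EuclideanSpace ℝ (Fin d))
    (π : Fin k → Equiv.Perm (Fin d)) :
    (∀ O : Set (EuclideanSpace ℝ (Fin d)), MeasurableSet O →
      ∫ y in O,
          ((1 / (k : ℝ)) * ∑ i, gaussDensity σ (WithLp.toLp 2 (fun j => u (π i j))) y
            - Real.exp ε * ((1 / (k : ℝ)) * ∑ i, gaussDensity σ (WithLp.toLp 2 (fun j => v (π i j))) y))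
        ≤ ∫ y, max (gaussDensity σ u y - Real.exp ε * gaussDensity σ v y) 0) ∧
    (∀ δ : ℝ, (∫ y, max (gaussDensity σ u y - Real.exp ε * gaussDensity σ v y) 0) ≤ δ →
      ∀ O : Set (EuclideanSpace ℝ (Fin d)), MeasurableSet O →
        ∫ y in O,
            ((1 / (k : ℝ)) * ∑ i, gaussDensity σ (WithLp.toLp 2 (fun j => u (π i j))) y
              - Real.exp ε * ((1 / (k : ℝ)) * ∑ i, gaussDensity σ (WithLp.toLp 2 (fun j => v (π i j))) y))
          ≤ δ) :=
  shuffled_gaussian_improves_privacy_general hσ ε u v π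
end

section
/- Let (Ω, ℙ) be a probability space, d a positive natural number, μ : Fin d → ℝ, and s : ℝ≥0 with s > 0. Suppose Y : Fin d → Ω → ℝ is a family of independent random variables (iIndepFun) with MeasureTheory.Measure.map (Y i) ℙ = ProbabilityTheory.gaussianReal (μ i) s for each i. Define σ_Y² = Real.log ((Real.exp s − 1) · (∑ i, Real.exp (2 · μ i)) / (∑ i, Real.exp (μ i))² + 1) and μ_Y = Real.log (∑ i, Real.exp (μ i)) + s/2 − σ_Y²/2. Then 𝔼[∑ i, Real.exp (Y i)] = Real.exp (μ_Y + σ_Y²/2) and 𝔼[(∑ i, Real.exp (Y i))²] = Real.exp (2·μ_Y + 2·σ_Y²); i.e., the Fenton–Wilkinson log-normal surrogate e^Z with Z ∼ N(μ_Y, σ_Y²) exactly matches the first two moments of the sum of log-normals ∑ i e^{Y i}. -/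
/-!
For `Y ∼ N(m, v)` one has `E[e^Y] = e^(m + v/2)` and `E[e^(2Y)] = e^(2m + 2v)`, so the sum
`S = ∑ e^(Y i)` has mean `M₁ = e^(s/2) ∑ e^(μ i)` and, its summands being pairwise independent,
second moment `M₂ = M₁² + ∑ Var[e^(Y i)] = M₁² + (e^s - 1) e^s ∑ e^(2 μ i)`. The Fenton–Wilkinson
parameters are `σ² = log (M₂ / M₁²)` and `μ_Y = log M₁ - σ²/2`, which invert the moment formulas
`M₁ = e^(μ_Y + σ²/2)`, `M₂ = e^(2μ_Y + 2σ²)` of a log-normal.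
-/

open MeasureTheory ProbabilityTheory Real

open scoped NNReal

section LogNormal

variable {Ω : Type*} {mΩ : MeasurableSpace Ω} {P : Measure Ω} {X : Ω → ℝ} {m : ℝ} {v : ℝ≥0}

lemma integrable_exp_mul_of_map_eq_gaussianReal [NeZero P] (hX : P.map X = gaussianReal m v)
    (t : ℝ) :
    Integrable (fun ω ↦ exp (t * X ω)) P :=
  mgf_pos_iff.1 (by rw [mgf_gaussianReal hX t]; exact exp_pos _)

lemma integral_exp_of_map_eq_gaussianReal (hX : P.map X = gaussianReal m v) :
    ∫ ω, exp (X ω) ∂P = exp (m + v / 2) := by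
  simpa [mgf] using mgf_gaussianReal hX 1

lemma integral_exp_two_mul_of_map_eq_gaussianReal (hX : P.map X = gaussianReal m v) :
    ∫ ω, exp (2 * X ω) ∂P = exp (2 * m + 2 * v) := by
  rw [← mgf, mgf_gaussianReal hX 2]
  ring_nf

lemma memLp_exp_of_map_eq_gaussianReal [NeZero P] (hX : P.map X = gaussianReal m v) :
    MemLp (fun ω ↦ exp (X ω)) 2 P := by
  have hXm : AEMeasurable X P := aemeasurable_of_map_neZero (by rw [hX]; infer_instance)
  refine (memLp_two_iff_integrable_sq
    (measurable_exp.comp_aemeasurable hXm).aestronglyMeasurable).2 ?_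
  simpa only [Function.comp_apply, ← exp_nat_mul, Nat.cast_ofNat]
    using integrable_exp_mul_of_map_eq_gaussianReal hX 2

lemma variance_exp_of_map_eq_gaussianReal [IsProbabilityMeasure P]
    (hX : P.map X = gaussianReal m v) :
    Var[fun ω ↦ exp (X ω); P] = (exp v - 1) * exp v * exp (2 * m) := by
  rw [variance_eq_sub (memLp_exp_of_map_eq_gaussianReal hX)]
  simp only [Pi.pow_apply, ← exp_nat_mul, Nat.cast_ofNat]
  rw [integral_exp_two_mul_of_map_eq_gaussianReal hX, integral_exp_of_map_eq_gaussianReal hX,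
    ← exp_nat_mul]
  simp only [Nat.cast_ofNat, ← exp_add, sub_mul, one_mul]
  ring_nf

end LogNormal

lemma integral_sum_sq_eq_sq_add_sum_variance {Ω ι : Type*} {mΩ : MeasurableSpace Ω}
    {P : Measure Ω} [IsProbabilityMeasure P] {X : ι → Ω → ℝ} {s : Finset ι}
    (hX : ∀ i ∈ s, MemLp (X i) 2 P) (hindep : Set.Pairwise ↑s fun i j ↦ X i ⟂ᵢ[P] X j) :
    ∫ ω, (∑ i ∈ s, X i ω) ^ 2 ∂P = (∑ i ∈ s, ∫ ω, X i ω ∂P) ^ 2 + ∑ i ∈ s, Var[X i; P] := by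
  have hvar := variance_eq_sub (memLp_finsetSum' s hX)
  simp only [Pi.pow_apply, Finset.sum_apply] at hvar
  rw [IndepFun.variance_sum hX hindep,
    integral_finsetSum s fun i hi ↦ (hX i hi).integrable one_le_two] at hvar
  linarith

namespace LogNormalFit

variable (m₁ m₂ : ℝ)

noncomputable def var : ℝ := log (m₂ / m₁ ^ 2)

noncomputable def mean : ℝ := log m₁ - var m₁ m₂ / 2

variable {m₁ m₂}

lemma first_moment_eq (h₁ : 0 < m₁) : m₁ = exp (mean m₁ m₂ + var m₁ m₂ / 2) := by
  rw [mean, sub_add_cancel, exp_log h₁]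

lemma second_moment_eq (h₁ : 0 < m₁) (h₂ : 0 < m₂) :
    m₂ = exp (2 * mean m₁ m₂ + 2 * var m₁ m₂) := by
  rw [mean, var, show 2 * (log m₁ - log (m₂ / m₁ ^ 2) / 2) + 2 * log (m₂ / m₁ ^ 2)
      = log (m₁ ^ 2) + log (m₂ / m₁ ^ 2) by rw [log_pow]; ring,
    exp_add, exp_log (by positivity), exp_log (by positivity)]
  field_simp

end LogNormalFit

theorem fenton_wilkinson_moment_matching_general {Ω : Type*} [MeasureSpace Ω]
    [IsProbabilityMeasure (ℙ : Measure Ω)] {d : ℕ} (hd : 0 < d)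
    (μ : Fin d → ℝ) {s : NNReal} (Y : Fin d → Ω → ℝ)
    (hindep : iIndepFun Y ℙ)
    (hmap : ∀ i, Measure.map (Y i) ℙ = gaussianReal (μ i) s) :
    (∫ ω, (∑ i, Real.exp (Y i ω)) ∂ℙ)
        = Real.exp ((Real.log (∑ i, Real.exp (μ i)) + (s : ℝ) / 2
            - Real.log ((Real.exp (s : ℝ) - 1) * (∑ i, Real.exp (2 * μ i))
                / (∑ i, Real.exp (μ i)) ^ 2 + 1) / 2)
          + Real.log ((Real.exp (s : ℝ) - 1) * (∑ i, Real.exp (2 * μ i))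
              / (∑ i, Real.exp (μ i)) ^ 2 + 1) / 2) ∧
    (∫ ω, (∑ i, Real.exp (Y i ω)) ^ 2 ∂ℙ)
        = Real.exp (2 * (Real.log (∑ i, Real.exp (μ i)) + (s : ℝ) / 2
            - Real.log ((Real.exp (s : ℝ) - 1) * (∑ i, Real.exp (2 * μ i))
                / (∑ i, Real.exp (μ i)) ^ 2 + 1) / 2)
          + 2 * Real.log ((Real.exp (s : ℝ) - 1) * (∑ i, Real.exp (2 * μ i))
              / (∑ i, Real.exp (μ i)) ^ 2 + 1)) := by
  set A := ∑ i, exp (μ i)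
  set B := ∑ i, exp (2 * μ i)
  have hA : 0 < A := Finset.sum_pos (fun i _ ↦ exp_pos _) (Finset.univ_nonempty_iff.2 ⟨⟨0, hd⟩⟩)
  have hB : 0 ≤ B := Finset.sum_nonneg fun i _ ↦ (exp_pos _).le
  have hexp_s : 0 ≤ exp s - 1 := sub_nonneg.2 (one_le_exp s.coe_nonneg)
  have hexp : ∀ i, MemLp (fun ω ↦ exp (Y i ω)) 2 ℙ :=
    fun i ↦ memLp_exp_of_map_eq_gaussianReal (hmap i)
  set M₁ := A * exp (s / 2)
  set M₂ := M₁ ^ 2 + (exp s - 1) * exp s * B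
  have hmean : ∑ i, ∫ ω, exp (Y i ω) = M₁ := by
    simp only [integral_exp_of_map_eq_gaussianReal (hmap _), exp_add]
    exact (Finset.sum_mul ..).symm
  have hsecond : ∫ ω, (∑ i, exp (Y i ω)) ^ 2 = M₂ := by
    rw [integral_sum_sq_eq_sq_add_sum_variance (fun i _ ↦ hexp i)
      (fun i _ j _ hij ↦ (hindep.indepFun hij).comp measurable_exp measurable_exp), hmean]
    simp only [variance_exp_of_map_eq_gaussianReal (hmap _)]
    rw [← Finset.mul_sum]
  have hlog : log A + s / 2 = log M₁ := by
    rw [log_mul hA.ne' (exp_pos _).ne', log_exp]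
  have hratio : (exp s - 1) * B / A ^ 2 + 1 = M₂ / M₁ ^ 2 := by
    have hM₁_sq : M₁ ^ 2 = A ^ 2 * exp s := by
      rw [mul_pow, ← exp_nat_mul]
      ring_nf
    simp only [M₂, hM₁_sq]
    field_simp
    ring
  rw [integral_finsetSum _ fun i _ ↦ (hexp i).integrable one_le_two, hmean, hsecond, hlog, hratio]
  exact ⟨LogNormalFit.first_moment_eq (by positivity),
    LogNormalFit.second_moment_eq (by positivity) (by positivity)⟩

/-- **Fenton–Wilkinson moment matching.** The log-normal surrogate `e^Z`, with
`Z ∼ N(μ_Y, σ_Y²)` as in the Fenton–Wilkinson approximation, exactly matches the first two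
moments of the sum of independent log-normals `∑ i, e^(Y i)`. -/
theorem fenton_wilkinson_moment_matching {Ω : Type*} [MeasureSpace Ω]
    [IsProbabilityMeasure (ℙ : Measure Ω)] {d : ℕ} (hd : 0 < d)
    (μ : Fin d → ℝ) {s : NNReal} (hs : 0 < s) (Y : Fin d → Ω → ℝ)
    (hindep : iIndepFun Y ℙ)
    (hmap : ∀ i, Measure.map (Y i) ℙ = gaussianReal (μ i) s) :
    (∫ ω, (∑ i, Real.exp (Y i ω)) ∂ℙ)
        = Real.exp ((Real.log (∑ i, Real.exp (μ i)) + (s : ℝ) / 2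
            - Real.log ((Real.exp (s : ℝ) - 1) * (∑ i, Real.exp (2 * μ i))
                / (∑ i, Real.exp (μ i)) ^ 2 + 1) / 2)
          + Real.log ((Real.exp (s : ℝ) - 1) * (∑ i, Real.exp (2 * μ i))
              / (∑ i, Real.exp (μ i)) ^ 2 + 1) / 2) ∧
    (∫ ω, (∑ i, Real.exp (Y i ω)) ^ 2 ∂ℙ)
        = Real.exp (2 * (Real.log (∑ i, Real.exp (μ i)) + (s : ℝ) / 2
            - Real.log ((Real.exp (s : ℝ) - 1) * (∑ i, Real.exp (2 * μ i))
                / (∑ i, Real.exp (μ i)) ^ 2 + 1) / 2)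
          + 2 * Real.log ((Real.exp (s : ℝ) - 1) * (∑ i, Real.exp (2 * μ i))
              / (∑ i, Real.exp (μ i)) ^ 2 + 1)) :=
  fenton_wilkinson_moment_matching_general hd μ Y hindep hmap
end
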